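/- Let n ≥ 0 be an integer. For a ∈ ℂ and k ∈ ℕ let binom(a, k) = a(a−1)⋯(a−k+1)/k! denote the generalized binomial coefficient. Define F(w) = Σ_{j=0}^{n} (−1)^{n−j} binom((2n+1)/2, n−j) · w^{2j+1}, define Ψ(z) = z · (1 + z^{−2})^{1/2} using the principal branch of the complex power, and for each integer k ≥ 0 define c_k = Σ_{j=0}^{n} (−1)^{n−j} binom((2n+1)/2, n−j) · binom((2j+1)/2, k+j+1). Then for every z ∈ ℂ with |z| > 1, the series Σ_{k=0}^{∞} c_k · z^{−(2k+1)} converges unconditionally (HasSum) with sum F(Ψ(z)) − z^{2n+1}. -/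

import Mathlib

/-!
Since `Ψ(z)^(2j+1) = z^(2j+1) (1 + z⁻²)^((2j+1)/2)`, the binomial series expands each odd power
of `Ψ` in powers `z^(2(j-m)+1)`. In `F(Ψ(z))` the terms with `m > j` give the series of the `c_k`,
while the terms with `m ≤ j` add up to `z^(2n+1)`: with `r = n + 1/2`, the coefficient of
`z^(2(n-d)+1)` is `∑ₛ (-1)^s binom(r, s) binom(r - s, d - s) = binom(r, d) ∑ₛ (-1)^s binom(d, s)`,
which vanishes unless `d = 0`.
-/

/-- The generalized binomial coefficient `binom(a, k) = a(a-1)⋯(a-k+1)/k!`. -/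
noncomputable def genBinom (a : ℂ) (k : ℕ) : ℂ :=
  (∏ i ∈ Finset.range k, (a - i)) / (k.factorial : ℂ)

open Finset

namespace Ring

variable {R : Type*} [CommRing R] [BinomialRing R]

theorem sum_range_neg_one_pow_mul_choose_mul_choose_sub (r : R) (d : ℕ) :
    ∑ s ∈ range (d + 1), (-1) ^ s * choose r s * choose (r - s) (d - s) =
      if d = 0 then 1 else 0 := by
  calc ∑ s ∈ range (d + 1), (-1) ^ s * choose r s * choose (r - s) (d - s)
      = ∑ s ∈ range (d + 1), ((-1) ^ s * d.choose s : ℤ) • choose r d := by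
        refine sum_congr rfl fun s hs ↦ ?_
        rw [mul_assoc, ← choose_smul_choose r (Nat.le_of_lt_succ (mem_range.1 hs)), mul_zsmul,
          natCast_zsmul, zsmul_eq_mul]
        push_cast
        ring
    _ = if d = 0 then 1 else 0 := by
        rw [← sum_smul, Int.alternating_sum_range_choose]
        split_ifs with hd <;> simp [hd]

theorem sum_range_neg_one_pow_mul_choose_mul_sum_choose_mul_pow (r x : R) (n : ℕ) :
    ∑ j ∈ range (n + 1), (-1) ^ (n - j) * choose r (n - j) *
        ∑ m ∈ range (j + 1), choose (r - ↑(n - j)) m * x ^ (j - m) = x ^ n := by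
  set g : ℕ → ℕ → R := fun s m ↦ (-1) ^ s * choose r s * choose (r - s) m * x ^ (n - (s + m))
  calc _ = ∑ s ∈ range (n + 1), ∑ m ∈ range (n + 1 - s), g s m := by
        rw [← sum_range_reflect]
        refine sum_congr rfl fun s hs ↦ ?_
        have hsn : s ≤ n := Nat.le_of_lt_succ (mem_range.1 hs)
        rw [show n + 1 - 1 - s = n - s by omega, Nat.sub_sub_self hsn, mul_sum,
          show n - s + 1 = n + 1 - s by omega]
        refine sum_congr rfl fun m _ ↦ ?_
        simp only [g, show n - (s + m) = n - s - m by omega]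
        ring
    _ = ∑ d ∈ range (n + 1), (if d = 0 then 1 else 0) * x ^ (n - d) := by
        rw [← sum_range_diag_flip]
        refine sum_congr rfl fun d _ ↦ ?_
        rw [← sum_range_neg_one_pow_mul_choose_mul_choose_sub r, sum_mul]
        refine sum_congr rfl fun s hs ↦ ?_
        simp only [g, show s + (d - s) = d by have := mem_range.1 hs; omega]
    _ = x ^ n := by simp

end Ring

lemma Complex.hasSum_choose_mul_pow (a : ℂ) {u : ℂ} (hu : ‖u‖ < 1) :
    HasSum (fun k ↦ Ring.choose a k * u ^ k) ((1 + u) ^ a) := by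
  have hu' : u ∈ Metric.eball (0 : ℂ) 1 := by
    rw [← ENNReal.ofReal_one, Metric.eball_ofReal]
    simpa using hu
  simpa [binomialSeries, FormalMultilinearSeries.coeff_ofScalars, mul_comm] using
    one_add_cpow_hasFPowerSeriesOnBall_zero.hasSum hu'

-- The part of the Laurent expansion of `Ψ(z)^(2j+1)` in negative powers of `z`.
theorem hasSum_choose_div_pow_odd {z : ℂ} (hz : 1 < ‖z‖) (j : ℕ) :
    HasSum (fun k ↦ Ring.choose ((2 * (j : ℂ) + 1) / 2) (k + j + 1) / z ^ (2 * k + 1))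
      ((z * (1 + (z ^ 2)⁻¹) ^ ((1 : ℂ) / 2)) ^ (2 * j + 1) -
        z * ∑ m ∈ range (j + 1), Ring.choose ((2 * (j : ℂ) + 1) / 2) m * (z ^ 2) ^ (j - m)) := by
  have hz0 : z ≠ 0 := norm_pos_iff.1 (one_pos.trans hz)
  have hu : ‖(z ^ 2)⁻¹‖ < 1 := by
    rw [norm_inv, norm_pow]
    exact inv_lt_one_of_one_lt₀ (one_lt_pow₀ hz two_ne_zero)
  have hΨ : (z * (1 + (z ^ 2)⁻¹) ^ ((1 : ℂ) / 2)) ^ (2 * j + 1) =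
      z ^ (2 * j + 1) * (1 + (z ^ 2)⁻¹) ^ ((2 * (j : ℂ) + 1) / 2) := by
    rw [mul_pow, ← Complex.cpow_nat_mul]
    push_cast
    ring_nf
  have hprincipal : ∀ m ∈ range (j + 1),
      z ^ (2 * j + 1) * (Ring.choose ((2 * (j : ℂ) + 1) / 2) m * (z ^ 2)⁻¹ ^ m) =
        z * (Ring.choose ((2 * (j : ℂ) + 1) / 2) m * (z ^ 2) ^ (j - m)) := by
    intro m hm
    obtain ⟨i, rfl⟩ := Nat.exists_eq_add_of_le (Nat.le_of_lt_succ (mem_range.1 hm))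
    rw [Nat.add_sub_cancel_left, inv_pow, ← pow_mul, ← pow_mul]
    field_simp
    ring
  have hterm : ∀ k : ℕ, Ring.choose ((2 * (j : ℂ) + 1) / 2) (k + j + 1) / z ^ (2 * k + 1) =
      z ^ (2 * j + 1) *
        (Ring.choose ((2 * (j : ℂ) + 1) / 2) (k + (j + 1)) * (z ^ 2)⁻¹ ^ (k + (j + 1))) := by
    intro k
    rw [← add_assoc, inv_pow, ← pow_mul]
    field_simp
    ring
  have h := ((hasSum_nat_add_iff' (j + 1)).2
    (Complex.hasSum_choose_mul_pow ((2 * (j : ℂ) + 1) / 2) hu)).mul_left (z ^ (2 * j + 1))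
  rwa [mul_sub, mul_sum, sum_congr rfl hprincipal, ← mul_sum, ← hΨ, ← funext hterm] at h

lemma genBinom_eq_choose (a : ℂ) (k : ℕ) : genBinom a k = Ring.choose a k := by
  rw [Ring.choose_eq_smul, genBinom, ← descPochhammer_eval_eq_prod_range, smul_eq_mul,
    div_eq_inv_mul, ← descPochhammer_map (algebraMap ℤ ℂ), Polynomial.eval_map_algebraMap,
    Polynomial.aeval_eq_smeval]

/-- Grunsky coefficients of the Cassini oval: with `Ψ(z) = z(1 + z⁻²)^{1/2}` and the
Faber polynomial `F(w) = Σ_{j=0}^{n} (-1)^{n-j} binom((2n+1)/2, n-j) w^{2j+1}`, for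
every `|z| > 1` one has
`z^{2n+1} = F(Ψ(z)) - Σ_{k≥0} c_{2n+1,2k+1} z^{-(2k+1)}` with
`c_{2n+1,2k+1} = Σ_{j=0}^{n} (-1)^{n-j} binom((2n+1)/2, n-j) binom((2j+1)/2, k+j+1)`. -/
theorem cassini_grunsky_coefficients (n : ℕ) :
    ∀ z : ℂ, 1 < ‖z‖ →
      HasSum
        (fun k : ℕ =>
          (∑ j ∈ Finset.range (n + 1),
            (-1 : ℂ) ^ (n - j) * genBinom ((2 * (n : ℂ) + 1) / 2) (n - j) *
              genBinom ((2 * (j : ℂ) + 1) / 2) (k + j + 1)) / z ^ (2 * k + 1))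
        ((∑ j ∈ Finset.range (n + 1),
            (-1 : ℂ) ^ (n - j) * genBinom ((2 * (n : ℂ) + 1) / 2) (n - j) *
              (z * ((1 + (z ^ 2)⁻¹) ^ ((1 : ℂ) / 2))) ^ (2 * j + 1)) -
          z ^ (2 * n + 1)) := by
  intro z hz
  simp only [genBinom_eq_choose]
  set N : ℂ := (2 * (n : ℂ) + 1) / 2
  have hshift : ∀ j ∈ range (n + 1), (2 * (j : ℂ) + 1) / 2 = N - ↑(n - j) := fun j hj ↦ by
    push_cast [Nat.cast_sub (Nat.le_of_lt_succ (mem_range.1 hj))]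
    ring
  have hprincipal : ∑ j ∈ range (n + 1), (-1) ^ (n - j) * Ring.choose N (n - j) *
      ∑ m ∈ range (j + 1), Ring.choose ((2 * (j : ℂ) + 1) / 2) m * (z ^ 2) ^ (j - m) =
        (z ^ 2) ^ n := by
    rw [← Ring.sum_range_neg_one_pow_mul_choose_mul_sum_choose_mul_pow N (z ^ 2) n]
    exact sum_congr rfl fun j hj ↦ by rw [hshift j hj]
  have hvalue : ∑ j ∈ range (n + 1), (-1) ^ (n - j) * Ring.choose N (n - j) *
      ((z * (1 + (z ^ 2)⁻¹) ^ ((1 : ℂ) / 2)) ^ (2 * j + 1) -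
        z * ∑ m ∈ range (j + 1), Ring.choose ((2 * (j : ℂ) + 1) / 2) m * (z ^ 2) ^ (j - m)) =
      ∑ j ∈ range (n + 1), (-1) ^ (n - j) * Ring.choose N (n - j) *
        (z * (1 + (z ^ 2)⁻¹) ^ ((1 : ℂ) / 2)) ^ (2 * j + 1) - z ^ (2 * n + 1) := by
    rw [pow_succ' z (2 * n), pow_mul, ← hprincipal, mul_sum, ← sum_sub_distrib]
    exact sum_congr rfl fun j _ ↦ by ring
  have h := hasSum_sum fun j (_ : j ∈ range (n + 1)) ↦
    (hasSum_choose_div_pow_odd hz j).mul_left ((-1) ^ (n - j) * Ring.choose N (n - j))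
  rw [hvalue] at h
  simpa only [mul_div_assoc, sum_div] using h
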